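/- For every natural number m and every cost structure C over alphabets α, β with costs in ℕ, the Levenshtein distance computed with all costs scaled by m equals m times the Levenshtein distance computed with C: for all lists Q and R, levenshtein (m • C) Q R = m * levenshtein C Q R, where m • C multiplies every insert, delete, and substitution cost of C by m. -/

import Mathlib

/-- Costs for the Levenshtein distance (removed from Mathlib; restored with its old meaning). -/
structure Levenshtein.Cost (α β δ : Type*) where
  /-- Cost to delete an element from a list. -/
  delete : α → δ
  /-- Cost in insert an element into a list. -/
  insert : β → δ
  /-- Cost to substitute one element for another in a list. -/
  substitute : α → β → δ

/-- (Private) Step of the dynamic program computing the Levenshtein distance, as in old Mathlib. -/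
def Levenshtein.impl {α β δ : Type*} [AddZeroClass δ] [Min δ] (C : Levenshtein.Cost α β δ)
    (xs : List α) (y : β) (d : {r : List δ // 0 < r.length}) : {r : List δ // 0 < r.length} :=
  let ⟨ds, w⟩ := d
  xs.zip (ds.zip ds.tail) |>.foldr
    (init := ⟨[ds.getLast (List.length_pos_iff.mp w) + C.insert y], by simp⟩)
    (fun ⟨x, d₀, d₁⟩ ⟨r, w⟩ =>
      ⟨min (C.delete x + r[0]) (min (C.insert y + d₀) (C.substitute x y + d₁)) :: r, by simp⟩)

/-- Levenshtein distances from each suffix of `xs` to `ys`, as in old Mathlib. -/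
def suffixLevenshtein {α β δ : Type*} [AddZeroClass δ] [Min δ] (C : Levenshtein.Cost α β δ)
    (xs : List α) (ys : List β) : {r : List δ // 0 < r.length} :=
  ys.foldr
    (Levenshtein.impl C xs)
    (xs.foldr (init := ⟨[0], by simp⟩) (fun a ⟨r, w⟩ => ⟨(C.delete a + r[0]) :: r, by simp⟩))

/-- The Levenshtein distance between two lists, as in old Mathlib. -/
def levenshtein {α β δ : Type*} [AddZeroClass δ] [Min δ] (C : Levenshtein.Cost α β δ)
    (xs : List α) (ys : List β) : δ :=
  let ⟨r, w⟩ := suffixLevenshtein C xs ys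
  r[0]

/-- The cost structure obtained by scaling every insert, delete, and substitution
cost of `C` by the natural number `m`. -/
def Levenshtein.Cost.smul {α β : Type*} (m : ℕ) (C : Levenshtein.Cost α β ℕ) :
    Levenshtein.Cost α β ℕ where
  delete a := m * C.delete a
  insert b := m * C.insert b
  substitute a b := m * C.substitute a b

/-!
The dynamic program computing `levenshtein` satisfies the usual edit-distance recurrence, whose
right-hand sides are built from the costs by `0`, `+` and `min` only. Any additive map that
commutes with `min` therefore commutes with the whole recurrence, and `x ↦ m * x` is such a map
on `ℕ` because it is monotone.
-/

namespace Levenshtein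

def Cost.map {α β δ δ' : Type*} (f : δ → δ') (C : Cost α β δ) : Cost α β δ' where
  delete a := f (C.delete a)
  insert b := f (C.insert b)
  substitute a b := f (C.substitute a b)

theorem Cost.smul_eq_map {α β : Type*} (m : ℕ) (C : Cost α β ℕ) :
    C.smul m = C.map (AddMonoidHom.mulLeft m) :=
  rfl

variable {α β δ : Type*} [AddZeroClass δ] [Min δ] (C : Cost α β δ)

theorem impl_cons {x : α} {xs : List α} {y : β} {d : δ} {ds : List δ} {w}
    (w' : 0 < ds.length) :
    impl C (x :: xs) y ⟨d :: ds, w⟩ =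
      let ⟨r, w⟩ := impl C xs y ⟨ds, w'⟩
      ⟨min (C.delete x + r[0]) (min (C.insert y + d) (C.substitute x y + ds[0])) :: r, by simp⟩ :=
  match ds, w' with | _ :: _, _ => rfl

theorem impl_length {xs : List α} {y : β} (d : {r : List δ // 0 < r.length})
    (w : d.1.length = xs.length + 1) :
    (impl C xs y d).1.length = xs.length + 1 := by
  induction xs generalizing d with
  | nil => rfl
  | cons x xs ih =>
    match d, w with
    | ⟨_ :: d :: ds, _⟩, w =>
      rw [impl_cons C (by simp)]
      simpa using ih ⟨d :: ds, by simp⟩ (by simpa using w)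

end Levenshtein

open Levenshtein

section

variable {α β δ : Type*} [AddZeroClass δ] [Min δ] (C : Cost α β δ)

theorem suffixLevenshtein_length (xs : List α) (ys : List β) :
    (suffixLevenshtein C xs ys).1.length = xs.length + 1 := by
  induction ys with
  | nil =>
    induction xs with
    | nil => rfl
    | cons _ xs ih => simpa [suffixLevenshtein] using ih
  | cons y ys ih => exact impl_length C _ ih

theorem suffixLevenshtein_cons_left (x : α) (xs : List α) (ys : List β) :
    suffixLevenshtein C (x :: xs) ys =
      ⟨levenshtein C (x :: xs) ys :: (suffixLevenshtein C xs ys).1, by simp⟩ := by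
  induction ys with
  | nil => rfl
  | cons y ys ih =>
    have htail : (suffixLevenshtein C (x :: xs) (y :: ys)).1.tail =
        (suffixLevenshtein C xs (y :: ys)).1 := by
      change (impl C (x :: xs) y (suffixLevenshtein C (x :: xs) ys)).1.tail = _
      rw [ih, impl_cons C (by simp [suffixLevenshtein_length])]
      rfl
    apply Subtype.ext
    rw [← htail]
    unfold levenshtein
    rcases suffixLevenshtein C (x :: xs) (y :: ys) with ⟨_ | ⟨d, ds⟩, w⟩
    · cases w
    · rfl

theorem levenshtein_nil_nil : levenshtein C ([] : List α) ([] : List β) = 0 := rfl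

-- `impl` adds the insertion cost on the right, and `δ` need not be commutative.
theorem levenshtein_nil_cons (y : β) (ys : List β) :
    levenshtein C ([] : List α) (y :: ys) = levenshtein C [] ys + C.insert y := by
  have hlen := suffixLevenshtein_length C ([] : List α) ys
  change (impl C [] y (suffixLevenshtein C [] ys)).1[0]'(impl _ _ _ _).2 = _
  unfold levenshtein
  generalize suffixLevenshtein C [] ys = S at hlen ⊢
  rcases S with ⟨_ | ⟨d, _ | _⟩, w⟩
  · cases w
  · rfl
  · simp at hlen

theorem levenshtein_cons_nil (x : α) (xs : List α) :
    levenshtein C (x :: xs) ([] : List β) = C.delete x + levenshtein C xs [] := rfl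

theorem levenshtein_cons_cons (x : α) (xs : List α) (y : β) (ys : List β) :
    levenshtein C (x :: xs) (y :: ys) =
      min (C.delete x + levenshtein C xs (y :: ys))
        (min (C.insert y + levenshtein C (x :: xs) ys)
          (C.substitute x y + levenshtein C xs ys)) := by
  change (impl C (x :: xs) y (suffixLevenshtein C (x :: xs) ys)).1[0]'(impl _ _ _ _).2 = _
  rw [suffixLevenshtein_cons_left, impl_cons C (by simp [suffixLevenshtein_length])]
  rfl

theorem levenshtein_map {δ' : Type*} [AddZeroClass δ'] [Min δ'] (f : δ →+ δ')
    (hf : ∀ a b, f (min a b) = min (f a) (f b)) (xs : List α) (ys : List β) :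
    levenshtein (C.map f) xs ys = f (levenshtein C xs ys) := by
  induction xs generalizing ys with
  | nil =>
    induction ys with
    | nil => rw [levenshtein_nil_nil, levenshtein_nil_nil, map_zero]
    | cons y ys ih => rw [levenshtein_nil_cons, levenshtein_nil_cons, ih, map_add]; rfl
  | cons x xs ihx =>
    induction ys with
    | nil => rw [levenshtein_cons_nil, levenshtein_cons_nil, ihx, map_add]; rfl
    | cons y ys ihy =>
      rw [levenshtein_cons_cons, levenshtein_cons_cons, ihx, ihx, ihy]
      simp only [hf, map_add]
      rfl

end

/-- **Scaling all gap penalties scales the edit distance.**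
For every `m : ℕ` and every cost structure `C`, the Levenshtein distance computed
with all costs scaled by `m` equals `m` times the Levenshtein distance with `C`:
`levenshtein (m • C) Q R = m * levenshtein C Q R` for all lists `Q` and `R`. -/
theorem levenshtein_smul (m : ℕ) {α β : Type*} (C : Levenshtein.Cost α β ℕ)
    (Q : List α) (R : List β) :
    levenshtein (Levenshtein.Cost.smul m C) Q R = m * levenshtein C Q R := by
  rw [Cost.smul_eq_map, levenshtein_map]
  · rfl
  · exact fun _ _ ↦ Monotone.map_min fun _ _ ↦ Nat.mul_le_mul_left m
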